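/- arXiv:2501.03871 — 5 statements merged into one kernel-verified Lean document; each statement's English description precedes it below -/
import Mathlib

section
/- Let m ≥ 1 and consider the triangle chain ∇_m. For every bottom vertex c_i and all vertices x, y of ∇_m with x ≠ c_i and y ≠ c_i, one has dist(x, c_i) + dist(c_i, y) > dist(x, y). Consequently, no shortest path in ∇_m contains a bottom vertex as an internal vertex. -/
/-!
Every bottom vertex `c_i` is simplicial: its only neighbours `u_{i-1}` and `u_i` are adjacent.
In a connected graph, a geodesic from `x` to a simplicial vertex `v ≠ x` reaches `v` from a
neighbour `a`, and one from `v` to `y ≠ v` leaves through a neighbour `b`; since `dist a b ≤ 1`,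
going from `a` to `b` directly is strictly shorter than the detour `a – v – b`.
-/

/-- The triangle chain `∇ m`: top vertices `u_0, …, u_m` (encoded `Sum.inl i` for
`i : Fin (m+1)`), bottom vertices `c_1, …, c_m` (encoded `Sum.inr j` for `j : Fin m`,
where `Sum.inr j` is the bottom vertex of triangle `j+1`, adjacent to `u_j` and `u_{j+1}`). -/
def triChain (m : ℕ) : SimpleGraph (Fin (m + 1) ⊕ Fin m) where
  Adj x y :=
    match x, y with
    | Sum.inl i, Sum.inl j => (i : ℕ) + 1 = j ∨ (j : ℕ) + 1 = i
    | Sum.inl i, Sum.inr j => (i : ℕ) = j ∨ (i : ℕ) = (j : ℕ) + 1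
    | Sum.inr j, Sum.inl i => (i : ℕ) = j ∨ (i : ℕ) = (j : ℕ) + 1
    | Sum.inr _, Sum.inr _ => False
  symm := by
    constructor
    rintro (i | i) (j | j) h
    · exact Or.symm h
    · exact h
    · exact h
    · exact h
  loopless := by
    constructor
    rintro (i | i) h
    · have h' : (i : ℕ) + 1 = i ∨ (i : ℕ) + 1 = i := h
      omega
    · exact h

namespace SimpleGraph

variable {V : Type*} {G : SimpleGraph V} {u v w x y : V}

lemma Reachable.exists_adj_dist_add_one_le (h : G.Reachable v w) (hne : v ≠ w) :
    ∃ a, G.Adj v a ∧ G.dist a w + 1 ≤ G.dist v w := by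
  obtain ⟨p, hp⟩ := h.exists_walk_length_eq_dist
  have hnil : ¬p.Nil := fun hnil => hne hnil.eq
  refine ⟨p.snd, p.adj_snd hnil, ?_⟩
  calc G.dist p.snd w + 1 ≤ p.tail.length + 1 := Nat.add_le_add_right (dist_le _) 1
    _ = G.dist v w := by rw [p.length_tail_add_one hnil, hp]

lemma Connected.dist_lt_dist_add_dist_of_isClique_neighborSet (hG : G.Connected)
    (hv : G.IsClique (G.neighborSet v)) (hx : x ≠ v) (hy : y ≠ v) :
    G.dist x y < G.dist x v + G.dist v y := by
  obtain ⟨a, hva, ha⟩ := (hG v x).exists_adj_dist_add_one_le hx.symm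
  obtain ⟨b, hvb, hb⟩ := (hG v y).exists_adj_dist_add_one_le hy.symm
  have hab : G.dist a b ≤ 1 := by
    rcases eq_or_ne a b with rfl | hne
    · simp
    · exact (dist_eq_one_iff_adj.mpr (hv hva hvb hne)).le
  have hxy : G.dist x y ≤ G.dist x a + G.dist a y := hG.dist_triangle
  have hay : G.dist a y ≤ G.dist a b + G.dist b y := hG.dist_triangle
  rw [dist_comm (u := a), dist_comm (u := v)] at ha
  omega

lemma Walk.dist_add_dist_le_of_mem_support {p : G.Walk u w} (hp : p.length = G.dist u w)
    (hv : v ∈ p.support) : G.dist u v + G.dist v w ≤ G.dist u w := by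
  classical
  rw [← hp, ← p.take_spec hv, Walk.length_append]
  exact Nat.add_le_add (dist_le _) (dist_le _)

lemma Walk.IsPath.ne_of_mem_support_tail_dropLast {p : G.Walk u w} (hp : p.IsPath)
    (hv : v ∈ p.support.tail.dropLast) : u ≠ v ∧ w ≠ v := by
  have hnodup := hp.support_nodup
  constructor
  · rintro rfl
    rw [← p.cons_tail_support] at hnodup
    exact hnodup.notMem (List.mem_of_mem_dropLast hv)
  · rintro rfl
    rw [← p.dropLast_support_concat] at hnodup
    rw [← List.tail_dropLast] at hv
    exact List.disjoint_of_nodup_append hnodup (List.mem_of_mem_tail hv)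
      (List.mem_singleton_self _)

theorem Walk.notMem_support_tail_dropLast_of_isClique_neighborSet (hG : G.Connected)
    (hv : G.IsClique (G.neighborSet v)) {p : G.Walk u w} (hp : p.IsPath)
    (hlen : p.length = G.dist u w) : v ∉ p.support.tail.dropLast := by
  intro hmem
  obtain ⟨hu, hw⟩ := hp.ne_of_mem_support_tail_dropLast hmem
  have hle := p.dist_add_dist_le_of_mem_support hlen
    (List.mem_of_mem_tail (List.mem_of_mem_dropLast hmem))
  exact (hG.dist_lt_dist_add_dist_of_isClique_neighborSet hv hu hw).not_ge hle

end SimpleGraph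

open SimpleGraph

lemma triChain_connected (m : ℕ) : (triChain m).Connected := by
  have htop : ∀ i : Fin (m + 1), (triChain m).Reachable (.inl 0) (.inl i) := by
    refine Fin.induction .rfl fun i hi => hi.trans (Adj.reachable ?_)
    exact Or.inl (by simp)
  have hall : ∀ x, (triChain m).Reachable (.inl 0) x
    | .inl i => htop i
    | .inr j => (htop j.castSucc).trans (Adj.reachable (Or.inl rfl))
  exact .mk fun x y => (hall x).symm.trans (hall y)

lemma triChain_isClique_neighborSet_inr {m : ℕ} (j : Fin m) :
    (triChain m).IsClique ((triChain m).neighborSet (.inr j)) := by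
  rintro (p | p) hp (q | q) hq hne
  · simp only [mem_neighborSet, triChain] at hp hq
    simp only [ne_eq, Sum.inl.injEq, Fin.ext_iff] at hne
    show (p : ℕ) + 1 = q ∨ (q : ℕ) + 1 = p
    omega
  all_goals first | exact hp.elim | exact hq.elim

theorem stmt1_general (m : ℕ) :
    (∀ (i : Fin m) (x y : Fin (m + 1) ⊕ Fin m),
      x ≠ Sum.inr i → y ≠ Sum.inr i →
      (triChain m).dist x (Sum.inr i) + (triChain m).dist (Sum.inr i) y
        > (triChain m).dist x y) ∧
    (∀ (x y : Fin (m + 1) ⊕ Fin m) (p : (triChain m).Walk x y),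
      p.IsPath → p.length = (triChain m).dist x y →
      ∀ i : Fin m, Sum.inr i ∉ p.support.tail.dropLast) := by
  have hG := triChain_connected m
  refine ⟨fun i x y hx hy => ?_, fun x y p hp hlen i => ?_⟩
  · exact hG.dist_lt_dist_add_dist_of_isClique_neighborSet
      (triChain_isClique_neighborSet_inr i) hx hy
  · exact Walk.notMem_support_tail_dropLast_of_isClique_neighborSet hG
      (triChain_isClique_neighborSet_inr i) hp hlen

/-- In the triangle chain `∇ m` (with `m ≥ 1`), for every bottom vertex `c_i` and all
vertices `x ≠ c_i`, `y ≠ c_i` we have `dist x c_i + dist c_i y > dist x y`; consequently,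
no shortest path contains a bottom vertex as an internal vertex. -/
theorem stmt1 (m : ℕ) (hm : 1 ≤ m) :
    (∀ (i : Fin m) (x y : Fin (m + 1) ⊕ Fin m),
      x ≠ Sum.inr i → y ≠ Sum.inr i →
      (triChain m).dist x (Sum.inr i) + (triChain m).dist (Sum.inr i) y
        > (triChain m).dist x y) ∧
    (∀ (x y : Fin (m + 1) ⊕ Fin m) (p : (triChain m).Walk x y),
      p.IsPath → p.length = (triChain m).dist x y →
      ∀ i : Fin m, Sum.inr i ∉ p.support.tail.dropLast) :=
  stmt1_general m
end

section
/- Let m ≥ 1 and let W_1 and W_2 be walks in the triangle chain ∇_m, both from u_0 to u_m, that respect unit capacities (every edge of ∇_m is traversed at most once in total by W_1 and W_2). Then for every i ∈ {1,…,m} there is a labeling {W, W'} = {W_1, W_2} such that W traverses the top edge u_{i−1}u_i exactly once and traverses neither bottom edge of triangle i, while W' traverses each of the two bottom edges u_{i−1}c_i and c_i u_i exactly once and does not traverse the top edge of triangle i; in particular, c_i is an internal vertex of exactly one of W_1, W_2. -/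
/-- The number of occurrences of `a` in the list `l` (counted with multiplicity). -/
noncomputable def cnt {α : Type*} (a : α) (l : List α) : ℕ :=
  letI := Classical.decEq α
  l.count a

/-!
A walk from `u` to `v` crosses every cut separating `u` from `v` an odd number of times. Triangle
`i` of the chain lies on two cuts separating `u_0` from `u_m`: one crossed only by its top edge
and its left bottom edge, the other only by its top edge and its right bottom edge. Hence for
each walk the counts `t, l, r` of these three edges satisfy `t + l` and `t + r` odd, and with
unit capacities the only possibility is that one walk has `(t, l, r) = (1, 0, 0)` and the other
`(0, 1, 1)`.
-/

namespace SimpleGraph.Walk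

variable {V : Type*} {G : SimpleGraph V} [DecidableEq V]

theorem odd_count_add_count_iff_of_cut {S : Set V} {e₁ e₂ : Sym2 V} (hne : e₁ ≠ e₂)
    (hcut : ∀ x y, G.Adj x y → (s(x, y) = e₁ ∨ s(x, y) = e₂ ↔ (x ∈ S ↔ y ∉ S)))
    {u v : V} (W : G.Walk u v) :
    Odd (W.edges.count e₁ + W.edges.count e₂) ↔ (u ∈ S ↔ v ∉ S) := by
  induction W with
  | nil => simp
  | @cons x y w hxy p ih =>
    have hc := hcut x y hxy
    simp only [edges_cons, List.count_cons, beq_iff_eq]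
    by_cases h₁ : s(x, y) = e₁ <;> by_cases h₂ : s(x, y) = e₂ <;>
      by_cases hx : x ∈ S <;> by_cases hy : y ∈ S <;>
      simp_all [Nat.odd_add_one, ← add_assoc, add_right_comm _ 1]

end SimpleGraph.Walk

theorem cnt_eq_count {α : Type*} [DecidableEq α] (a : α) (l : List α) :
    cnt a l = l.count a := by
  unfold cnt; congr; exact Subsingleton.elim _ _

open SimpleGraph

namespace triChain

variable {m : ℕ}

/-- Position in the order `u_0, c_1, u_1, …, c_m, u_m`; the two cuts of triangle `i` are
`{pos ≤ 2i}` and `{pos ≤ 2i + 1}`. -/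
def pos : Fin (m + 1) ⊕ Fin m → ℕ
  | Sum.inl j => 2 * j
  | Sum.inr j => 2 * j + 1

abbrev topEdge (i : Fin m) : Sym2 (Fin (m + 1) ⊕ Fin m) := s(Sum.inl i.castSucc, Sum.inl i.succ)
abbrev leftEdge (i : Fin m) : Sym2 (Fin (m + 1) ⊕ Fin m) := s(Sum.inl i.castSucc, Sum.inr i)
abbrev rightEdge (i : Fin m) : Sym2 (Fin (m + 1) ⊕ Fin m) := s(Sum.inr i, Sum.inl i.succ)

theorem eq_topEdge_or_leftEdge_iff (i : Fin m) (x y : Fin (m + 1) ⊕ Fin m)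
    (h : (triChain m).Adj x y) :
    s(x, y) = topEdge i ∨ s(x, y) = leftEdge i ↔ (pos x ≤ 2 * i ↔ ¬pos y ≤ 2 * i) := by
  rcases x with j | j <;> rcases y with k | k <;>
    simp only [triChain, pos, Sym2.eq_iff, Sum.inl.injEq, Sum.inr.injEq, Fin.ext_iff,
      Fin.val_castSucc, Fin.val_succ, reduceCtorEq, and_false, false_and, or_false,
      false_or] at h ⊢ <;> omega

theorem eq_topEdge_or_rightEdge_iff (i : Fin m) (x y : Fin (m + 1) ⊕ Fin m)
    (h : (triChain m).Adj x y) :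
    s(x, y) = topEdge i ∨ s(x, y) = rightEdge i ↔ (pos x ≤ 2 * i + 1 ↔ ¬pos y ≤ 2 * i + 1) := by
  rcases x with j | j <;> rcases y with k | k <;>
    simp only [triChain, pos, Sym2.eq_iff, Sum.inl.injEq, Sum.inr.injEq, Fin.ext_iff,
      Fin.val_castSucc, Fin.val_succ, reduceCtorEq, and_false, false_and, or_false,
      false_or] at h ⊢ <;> omega

theorem odd_cnt_top_add_cnt_left (i : Fin m)
    (W : (triChain m).Walk (Sum.inl 0) (Sum.inl (Fin.last m))) :
    Odd (cnt (topEdge i) W.edges + cnt (leftEdge i) W.edges) := by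
  simp only [cnt_eq_count]
  rw [W.odd_count_add_count_iff_of_cut (S := {x | pos x ≤ 2 * i}) (by simp)
    (eq_topEdge_or_leftEdge_iff i)]
  simp [pos]

theorem odd_cnt_top_add_cnt_right (i : Fin m)
    (W : (triChain m).Walk (Sum.inl 0) (Sum.inl (Fin.last m))) :
    Odd (cnt (topEdge i) W.edges + cnt (rightEdge i) W.edges) := by
  simp only [cnt_eq_count]
  rw [W.odd_count_add_count_iff_of_cut (S := {x | pos x ≤ 2 * i + 1}) (by simp)
    (eq_topEdge_or_rightEdge_iff i)]
  simp [pos]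
  omega

theorem eq_leftEdge_or_eq_rightEdge (i : Fin m) {e : Sym2 (Fin (m + 1) ⊕ Fin m)}
    (he : e ∈ (triChain m).edgeSet) (hi : Sum.inr i ∈ e) : e = leftEdge i ∨ e = rightEdge i := by
  induction e using Sym2.ind with
  | _ x y =>
    rcases x with j | j <;> rcases y with k | k <;>
      simp only [mem_edgeSet, triChain, Sym2.mem_iff, Sym2.eq_iff, Sum.inl.injEq, Sum.inr.injEq,
        Fin.ext_iff, Fin.val_castSucc, Fin.val_succ, reduceCtorEq, and_false, or_false,
        false_or] at he hi ⊢ <;> omega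

theorem inr_mem_support_iff (i : Fin m) {a : Fin (m + 1)}
    (W : (triChain m).Walk (Sum.inl 0) (Sum.inl a)) :
    Sum.inr i ∈ W.support ↔ 0 < cnt (leftEdge i) W.edges ∨ 0 < cnt (rightEdge i) W.edges := by
  classical
  simp only [cnt_eq_count, List.count_pos_iff, Walk.mem_support_iff_exists_mem_edges,
    reduceCtorEq, false_or]
  constructor
  · rintro ⟨e, he, hi⟩
    rcases eq_leftEdge_or_eq_rightEdge i (W.edges_subset_edgeSet he) hi with rfl | rfl
    exacts [.inl he, .inr he]
  · rintro (h | h)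
    · exact ⟨_, h, by simp⟩
    · exact ⟨_, h, by simp⟩

end triChain

theorem triangle_split {t₁ l₁ r₁ t₂ l₂ r₂ : ℕ} (hl₁ : Odd (t₁ + l₁)) (hr₁ : Odd (t₁ + r₁))
    (hl₂ : Odd (t₂ + l₂)) (hr₂ : Odd (t₂ + r₂)) (ht : t₁ + t₂ ≤ 1) (hl : l₁ + l₂ ≤ 1)
    (hr : r₁ + r₂ ≤ 1) :
    (t₁ = 1 ∧ l₁ = 0 ∧ r₁ = 0 ∧ l₂ = 1 ∧ r₂ = 1 ∧ t₂ = 0) ∨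
      (t₂ = 1 ∧ l₂ = 0 ∧ r₂ = 0 ∧ l₁ = 1 ∧ r₁ = 1 ∧ t₁ = 0) := by
  rw [Nat.odd_iff] at hl₁ hr₁ hl₂ hr₂
  omega

theorem stmt2_general (m : ℕ)
    (W₁ W₂ : (triChain m).Walk (Sum.inl 0) (Sum.inl (Fin.last m)))
    (hcap : ∀ e : Sym2 (Fin (m + 1) ⊕ Fin m), cnt e W₁.edges + cnt e W₂.edges ≤ 1) :
    ∀ i : Fin m,
      (((cnt s(Sum.inl i.castSucc, Sum.inl i.succ) W₁.edges = 1 ∧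
          cnt s(Sum.inl i.castSucc, Sum.inr i) W₁.edges = 0 ∧
          cnt s(Sum.inr i, Sum.inl i.succ) W₁.edges = 0 ∧
          cnt s(Sum.inl i.castSucc, Sum.inr i) W₂.edges = 1 ∧
          cnt s(Sum.inr i, Sum.inl i.succ) W₂.edges = 1 ∧
          cnt s(Sum.inl i.castSucc, Sum.inl i.succ) W₂.edges = 0) ∨
        (cnt s(Sum.inl i.castSucc, Sum.inl i.succ) W₂.edges = 1 ∧
          cnt s(Sum.inl i.castSucc, Sum.inr i) W₂.edges = 0 ∧
          cnt s(Sum.inr i, Sum.inl i.succ) W₂.edges = 0 ∧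
          cnt s(Sum.inl i.castSucc, Sum.inr i) W₁.edges = 1 ∧
          cnt s(Sum.inr i, Sum.inl i.succ) W₁.edges = 1 ∧
          cnt s(Sum.inl i.castSucc, Sum.inl i.succ) W₁.edges = 0)) ∧
      ((Sum.inr i ∈ W₁.support ∧ Sum.inr i ∉ W₂.support) ∨
        (Sum.inr i ∉ W₁.support ∧ Sum.inr i ∈ W₂.support))) := by
  intro i
  have key := triangle_split
    (triChain.odd_cnt_top_add_cnt_left i W₁) (triChain.odd_cnt_top_add_cnt_right i W₁)
    (triChain.odd_cnt_top_add_cnt_left i W₂) (triChain.odd_cnt_top_add_cnt_right i W₂)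
    (hcap _) (hcap _) (hcap _)
  refine ⟨key, ?_⟩
  simp only [triChain.inr_mem_support_iff]
  omega

/-- if two walks in `∇ m` from `u_0` to `u_m` respect unit capacities, then in
every triangle `i` one of them uses precisely the top edge of triangle `i` and the other
precisely the two bottom edges of triangle `i`; in particular the bottom vertex `c_i` is an
internal vertex of exactly one of the two walks. -/
theorem stmt2 (m : ℕ) (hm : 1 ≤ m)
    (W₁ W₂ : (triChain m).Walk (Sum.inl 0) (Sum.inl (Fin.last m)))
    (hcap : ∀ e : Sym2 (Fin (m + 1) ⊕ Fin m), cnt e W₁.edges + cnt e W₂.edges ≤ 1) :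
    ∀ i : Fin m,
      (((cnt s(Sum.inl i.castSucc, Sum.inl i.succ) W₁.edges = 1 ∧
          cnt s(Sum.inl i.castSucc, Sum.inr i) W₁.edges = 0 ∧
          cnt s(Sum.inr i, Sum.inl i.succ) W₁.edges = 0 ∧
          cnt s(Sum.inl i.castSucc, Sum.inr i) W₂.edges = 1 ∧
          cnt s(Sum.inr i, Sum.inl i.succ) W₂.edges = 1 ∧
          cnt s(Sum.inl i.castSucc, Sum.inl i.succ) W₂.edges = 0) ∨
        (cnt s(Sum.inl i.castSucc, Sum.inl i.succ) W₂.edges = 1 ∧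
          cnt s(Sum.inl i.castSucc, Sum.inr i) W₂.edges = 0 ∧
          cnt s(Sum.inr i, Sum.inl i.succ) W₂.edges = 0 ∧
          cnt s(Sum.inl i.castSucc, Sum.inr i) W₁.edges = 1 ∧
          cnt s(Sum.inr i, Sum.inl i.succ) W₁.edges = 1 ∧
          cnt s(Sum.inl i.castSucc, Sum.inl i.succ) W₁.edges = 0)) ∧
      ((Sum.inr i ∈ W₁.support ∧ Sum.inr i ∉ W₂.support) ∨
        (Sum.inr i ∉ W₁.support ∧ Sum.inr i ∈ W₂.support))) :=
  stmt2_general m W₁ W₂ hcap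
end

section
/- Let m ≥ 1. In the triangle chain ∇_m, the graph distance between u_0 and u_m equals m, and the path u_0 u_1 ⋯ u_m through the top edges is the unique shortest path from u_0 to u_m. -/
/-!
Give the top vertex `u_i` height `2i` and the bottom vertex `c_{j+1}` height `2j+1`. One edge
raises the height by at most `2`, so a walk from `u_0` (height `0`) to `u_m` (height `2m`) has
length at least `m`; if its length is exactly `m`, every step raises the height by exactly `2`.
The heights along such a walk are then `0, 2, …, 2m`, and since the height determines the
vertex, the walk is the top path.
-/

namespace SimpleGraph.Walk

variable {V : Type*} {G : SimpleGraph V} {f : V → ℕ} {d : ℕ}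

theorem apply_le_add_mul_length (hf : ∀ ⦃x y⦄, G.Adj x y → f y ≤ f x + d) {x y : V}
    (p : G.Walk x y) : f y ≤ f x + d * p.length := by
  induction p with
  | nil => simp
  | cons h q ih =>
    rw [length_cons]
    linarith [hf h]

theorem map_support_eq_range' (hf : ∀ ⦃x y⦄, G.Adj x y → f y ≤ f x + d) {x y : V}
    (p : G.Walk x y) (hp : f y = f x + d * p.length) :
    p.support.map f = List.range' (f x) (p.length + 1) d := by
  induction p with
  | nil => simp
  | @cons u v w h q ih =>
    have hq := apply_le_add_mul_length hf q
    have hstep := hf h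
    rw [length_cons] at hp ⊢
    have hv : f v = f u + d := by linarith
    rw [support_cons, List.map_cons, ih (by linarith), hv]
    rfl

end SimpleGraph.Walk

namespace triChain

def height (m : ℕ) : Fin (m + 1) ⊕ Fin m → ℕ
  | .inl i => 2 * i
  | .inr j => 2 * j + 1

theorem height_le_of_adj {m : ℕ} ⦃x y : Fin (m + 1) ⊕ Fin m⦄ (h : (triChain m).Adj x y) :
    height m y ≤ height m x + 2 := by
  rcases x with i | i <;> rcases y with j | j <;> simp only [triChain, height] at h ⊢ <;> omega

theorem height_injective (m : ℕ) : Function.Injective (height m) := by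
  rintro (i | i) (j | j) h <;>
    simp only [height, Sum.inl.injEq, Sum.inr.injEq, Fin.ext_iff, reduceCtorEq] at h ⊢ <;> omega

theorem map_height_topVertices (m : ℕ) :
    ((List.finRange (m + 1)).map Sum.inl).map (height m) = List.range' 0 (m + 1) 2 := by
  apply List.ext_getElem <;> simp [height, List.getElem_range']

theorem exists_walk_length_eq (m : ℕ) (i : Fin (m + 1)) :
    ∃ p : (triChain m).Walk (Sum.inl 0) (Sum.inl i), p.length = i := by
  induction i using Fin.induction with
  | zero => exact ⟨.nil, rfl⟩
  | succ i ih =>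
    obtain ⟨p, hp⟩ := ih
    have h : (triChain m).Adj (Sum.inl i.castSucc) (Sum.inl i.succ) := by simp [triChain]
    exact ⟨p.concat h, by simp [hp]⟩

end triChain

open SimpleGraph triChain

theorem stmt4_general (m : ℕ) :
    (triChain m).dist (Sum.inl 0) (Sum.inl (Fin.last m)) = m ∧
    (∃ p : (triChain m).Walk (Sum.inl 0) (Sum.inl (Fin.last m)),
      p.length = m ∧ p.support = (List.finRange (m + 1)).map Sum.inl) ∧
    (∀ p : (triChain m).Walk (Sum.inl 0) (Sum.inl (Fin.last m)),
      p.length = m → p.support = (List.finRange (m + 1)).map Sum.inl) := by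
  have length_ge (p : (triChain m).Walk (Sum.inl 0) (Sum.inl (Fin.last m))) : m ≤ p.length := by
    have := p.apply_le_add_mul_length height_le_of_adj
    simp only [height, Fin.val_last, Fin.val_zero] at this
    omega
  have top_path (p : (triChain m).Walk (Sum.inl 0) (Sum.inl (Fin.last m))) (hp : p.length = m) :
      p.support = (List.finRange (m + 1)).map Sum.inl := by
    have hmap := p.map_support_eq_range' height_le_of_adj (by simp [height, hp])
    apply List.map_injective_iff.mpr (height_injective m)
    rw [hmap, hp, map_height_topVertices]
    rfl
  obtain ⟨p₀, hp₀⟩ : ∃ p : (triChain m).Walk (Sum.inl 0) (Sum.inl (Fin.last m)), p.length = m :=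
    exists_walk_length_eq m (Fin.last m)
  obtain ⟨q, hq⟩ := Reachable.exists_walk_length_eq_dist ⟨p₀⟩
  exact ⟨le_antisymm ((dist_le p₀).trans hp₀.le) ((length_ge q).trans hq.le),
    ⟨p₀, hp₀, top_path p₀ hp₀⟩, top_path⟩

/-- in `∇ m` (with `m ≥ 1`), the distance from `u_0` to `u_m` is `m`, the top
path `u_0 u_1 ⋯ u_m` is a shortest path from `u_0` to `u_m`, and it is the unique such
shortest path (any walk of length `m` from `u_0` to `u_m` has exactly the top vertices, in
order, as its support). -/
theorem stmt4 (m : ℕ) (hm : 1 ≤ m) :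
    (triChain m).dist (Sum.inl 0) (Sum.inl (Fin.last m)) = m ∧
    (∃ p : (triChain m).Walk (Sum.inl 0) (Sum.inl (Fin.last m)),
      p.length = m ∧ p.support = (List.finRange (m + 1)).map Sum.inl) ∧
    (∀ p : (triChain m).Walk (Sum.inl 0) (Sum.inl (Fin.last m)),
      p.length = m → p.support = (List.finRange (m + 1)).map Sum.inl) :=
  stmt4_general m
end

section
/- Let C be a cycle graph on n ≥ 3 vertices and let (s_1,t_1), …, (s_d,t_d) with d ≥ 3 be pairs of vertices of C with s_i ≠ t_i for every i. Then there exist pairwise edge-disjoint paths P_1, …, P_d in C with P_i joining s_i and t_i if and only if both of the following hold: (i) {s_i, t_i} ≠ {s_j, t_j} for all i ≠ j; (ii) for every i, at least one of the two s_i–t_i arcs of C has no internal vertex equal to some s_j or t_j with j ≠ i. -/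
/-!
A path in the cycle `ZMod n` never turns back, so it is an arc `a, a + 1, …, a + k` traversed in
one direction or the other. If the paths are pairwise edge-disjoint, a terminal inside another
path's arc would share one of the two edges there with its own path, and two paths with the same
ends must be the two complementary arcs, which leave no edge for a third path. Conversely, two arcs
that share an edge and have no end of either one inside the other coincide; so the arcs given by
(ii) are edge-disjoint once their end pairs are distinct.
-/

/-- The cycle graph on `n` vertices (for `n ≥ 3`), with vertex set `ZMod n` and
`x` adjacent to `y` iff they are distinct and differ by `1`. -/
def cycleG (n : ℕ) : SimpleGraph (ZMod n) where
  Adj x y := x ≠ y ∧ (y = x + 1 ∨ x = y + 1)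
  symm := by
    constructor
    rintro x y ⟨h, h'⟩
    exact ⟨h.symm, Or.symm h'⟩
  loopless := by
    constructor
    rintro x ⟨h, -⟩
    exact h rfl

open SimpleGraph

theorem SimpleGraph.Walk.mem_tail_dropLast_support_iff {V : Type*} {G : SimpleGraph V} {u w : V}
    (p : G.Walk u w) (v : V) :
    v ∈ p.support.tail.dropLast ↔ ∃ i, 0 < i ∧ i < p.length ∧ p.getVert i = v := by
  simp only [List.mem_iff_getElem, List.getElem_dropLast, List.getElem_tail,
    Walk.support_getElem_eq_getVert, List.length_dropLast, List.length_tail, Walk.length_support]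
  constructor
  · rintro ⟨i, hi, rfl⟩
    exact ⟨i + 1, by omega, by omega, rfl⟩
  · rintro ⟨i, hi, hil, rfl⟩
    exact ⟨i - 1, by omega, by congr 1; omega⟩

namespace cycleG

variable {n : ℕ}

def arcEdges (a : ZMod n) (k : ℕ) : Set (Sym2 (ZMod n)) :=
  {e | ∃ j < k, e = s(a + j, a + j + 1)}

def arcInterior (a : ZMod n) (k : ℕ) : Set (ZMod n) :=
  {v | ∃ j, 0 < j ∧ j < k ∧ v = a + j}

/-- The walk `W` runs through the arc of the cycle from `a` to `a + k`, in either direction. -/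
structure IsArc {x y : ZMod n} (W : (cycleG n).Walk x y) (a : ZMod n) (k : ℕ) : Prop where
  ends : s(x, y) = s(a, a + k)
  mem_edges : ∀ e, e ∈ W.edges ↔ e ∈ arcEdges a k
  mem_interior : ∀ v, v ∈ W.support.tail.dropLast ↔ v ∈ arcInterior a k

theorem exists_getVert_eq_of_isPath {x y : ZMod n} {W : (cycleG n).Walk x y} (hW : W.IsPath) :
    ∃ ε : ZMod n, (ε = 1 ∨ ε = -1) ∧ ∀ i ≤ W.length, W.getVert i = x + i * ε := by
  induction W with
  | nil => exact ⟨1, .inl rfl, fun i hi => by simp_all⟩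
  | @cons u v w h p ih =>
    rw [Walk.cons_isPath_iff] at hW
    obtain ⟨ε, hε, hp⟩ := ih hW.1
    obtain ⟨δ, hδ, rfl⟩ : ∃ δ : ZMod n, (δ = 1 ∨ δ = -1) ∧ v = u + δ := by
      rcases h.2 with rfl | rfl
      · exact ⟨1, .inl rfl, rfl⟩
      · exact ⟨-1, .inr rfl, by ring⟩
    -- otherwise `p` would step straight back to `u`
    have hεδ : p.length = 0 ∨ ε = δ := by
      by_contra! hne
      have hopp : ε = -δ := by
        rcases hε with rfl | rfl <;> rcases hδ with rfl | rfl <;> simp_all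
      refine hW.2 (Walk.mem_support_iff_exists_getVert.mpr ⟨1, ?_, by omega⟩)
      rw [hp 1 (by omega), hopp]
      ring
    refine ⟨δ, hδ, fun i hi => ?_⟩
    rw [Walk.length_cons] at hi
    rcases i with _ | i
    · simp
    rw [Walk.getVert_cons_succ, hp i (by omega)]
    rcases hεδ with h0 | rfl
    · obtain rfl : i = 0 := by omega
      simp
    · push_cast
      ring

theorem isArc_of_getVert_eq_add {x y : ZMod n} {W : (cycleG n).Walk x y}
    (hW : ∀ i ≤ W.length, W.getVert i = x + i) : IsArc W x W.length where
  ends := by rw [← hW _ le_rfl, Walk.getVert_length]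
  mem_edges e := by
    induction e using Sym2.ind with
    | _ u v =>
      rw [Walk.mk_mem_edges_iff_exists]
      refine exists_congr fun j => and_congr_right fun hj => ?_
      rw [hW j hj.le, hW (j + 1) hj, eq_comm]
      push_cast
      rw [add_assoc]
  mem_interior v := by
    rw [Walk.mem_tail_dropLast_support_iff]
    refine exists_congr fun j => and_congr_right fun _ => and_congr_right fun hj => ?_
    rw [hW j hj.le, eq_comm]

theorem IsArc.of_reverse {x y : ZMod n} {W : (cycleG n).Walk x y} {a : ZMod n} {k : ℕ}
    (h : IsArc W.reverse a k) : IsArc W a k where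
  ends := Sym2.eq_swap.trans h.ends
  mem_edges e := by rw [← h.mem_edges, Walk.edges_reverse, List.mem_reverse]
  mem_interior v := by
    rw [← h.mem_interior, Walk.support_reverse, List.tail_reverse, List.dropLast_reverse,
      List.mem_reverse, List.tail_dropLast]

theorem exists_isArc_of_isPath {x y : ZMod n} {W : (cycleG n).Walk x y} (hW : W.IsPath) :
    ∃ a k, IsArc W a k := by
  obtain ⟨ε, rfl | rfl, hε⟩ := exists_getVert_eq_of_isPath hW
  · exact ⟨x, W.length, isArc_of_getVert_eq_add fun i hi => by rw [hε i hi, mul_one]⟩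
  · refine ⟨y, W.length, IsArc.of_reverse ?_⟩
    rw [← Walk.length_reverse]
    refine isArc_of_getVert_eq_add fun i hi => ?_
    rw [Walk.length_reverse] at hi
    have hy := hε _ le_rfl
    rw [W.getVert_length] at hy
    rw [Walk.getVert_reverse, hε _ (Nat.sub_le _ _), Nat.cast_sub hi]
    linear_combination -hy

theorem eq_of_mk_add_one_eq (hn : 3 ≤ n) {u w : ZMod n} (h : s(u, u + 1) = s(w, w + 1)) :
    u = w := by
  rcases Sym2.eq_iff.mp h with ⟨rfl, -⟩ | ⟨rfl, h⟩
  · rfl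
  have h2 : ((2 : ℕ) : ZMod n) = 0 := by
    push_cast
    linear_combination h
  exact absurd (Nat.le_of_dvd two_pos ((ZMod.natCast_eq_zero_iff 2 n).mp h2)) (by omega)

theorem mk_mem_arcEdges_self {a : ZMod n} {k : ℕ} (hk : 0 < k) : s(a, a + 1) ∈ arcEdges a k :=
  ⟨0, hk, by simp⟩

theorem mem_arcInterior_of_add_eq {a b : ZMod n} {p q l : ℕ} (h : a + p = b + q) (hpq : p < q)
    (hq : q < l) : a ∈ arcInterior b l :=
  ⟨q - p, by omega, by omega, by rw [Nat.cast_sub hpq.le]; linear_combination h⟩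

theorem mk_mem_arcEdges_union {a b : ZMod n} {k l : ℕ} (hkl : 0 < k + l) (hab : a + k = b)
    (hba : b + l = a) (c : ZMod n) : s(c, c + 1) ∈ arcEdges a k ∪ arcEdges b l := by
  have hdvd : n ∣ k + l := (ZMod.natCast_eq_zero_iff _ _).mp (by push_cast; linear_combination hab + hba)
  have : NeZero n := ⟨by rintro rfl; rw [zero_dvd_iff] at hdvd; omega⟩
  have hv : ((c - a).val : ZMod n) = c - a := ZMod.natCast_zmod_val _
  have hvn : (c - a).val < k + l := (ZMod.val_lt _).trans_le (Nat.le_of_dvd hkl hdvd)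
  by_cases hvk : (c - a).val < k
  · exact .inl ⟨_, hvk, by rw [hv]; ring_nf⟩
  · refine .inr ⟨(c - a).val - k, by omega, ?_⟩
    rw [Nat.cast_sub (by omega), hv, ← hab]
    ring_nf

theorem mk_ne_of_disjoint_arcEdges {a b c : ZMod n} {k l m : ℕ} (hk : 0 < k) (hl : 0 < l)
    (hm : 0 < m) (hab : Disjoint (arcEdges a k) (arcEdges b l))
    (hca : Disjoint (arcEdges c m) (arcEdges a k)) (hcb : Disjoint (arcEdges c m) (arcEdges b l)) :
    s(a, a + k) ≠ s(b, b + l) := by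
  intro h
  rcases Sym2.eq_iff.mp h with ⟨rfl, -⟩ | ⟨hba, hab'⟩
  · exact Set.disjoint_left.mp hab (mk_mem_arcEdges_self hk) (mk_mem_arcEdges_self hl)
  · rcases mk_mem_arcEdges_union (by omega) hab' hba.symm c with hc | hc
    · exact Set.disjoint_left.mp hca (mk_mem_arcEdges_self hm) hc
    · exact Set.disjoint_left.mp hcb (mk_mem_arcEdges_self hm) hc

theorem notMem_arcInterior_of_disjoint {a b : ZMod n} {k l : ℕ} (hl : 0 < l)
    (h : Disjoint (arcEdges a k) (arcEdges b l)) : ∀ v ∈ s(b, b + l), v ∉ arcInterior a k := by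
  rintro v hv ⟨j, hj, hjk, rfl⟩
  rcases Sym2.mem_iff.mp hv with hb | hb
  · exact Set.disjoint_left.mp h ⟨j, hjk, rfl⟩ (by rw [hb]; exact mk_mem_arcEdges_self hl)
  · obtain ⟨j, rfl⟩ := Nat.exists_eq_add_of_lt hj
    obtain ⟨l, rfl⟩ := Nat.exists_eq_add_of_lt hl
    have hb' : a + j = b + l := by push_cast at hb; linear_combination hb
    exact Set.disjoint_left.mp h ⟨j, by omega, rfl⟩ ⟨l, by omega, by rw [hb']⟩

theorem mk_eq_of_not_disjoint_arcEdges (hn : 3 ≤ n) {a b : ZMod n} {k l : ℕ}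
    (h : ¬Disjoint (arcEdges a k) (arcEdges b l)) (ha : ∀ v ∈ s(a, a + k), v ∉ arcInterior b l)
    (hb : ∀ v ∈ s(b, b + l), v ∉ arcInterior a k) : s(a, a + k) = s(b, b + l) := by
  obtain ⟨-, ⟨p, hp, rfl⟩, ⟨q, hq, he⟩⟩ := Set.not_disjoint_iff.mp h
  have hpq : a + p = b + q := eq_of_mk_add_one_eq hn he
  rcases lt_trichotomy p q with hlt | rfl | hgt
  · exact absurd (mem_arcInterior_of_add_eq hpq hlt hq) (ha a (Sym2.mem_mk_left _ _))
  · obtain rfl : a = b := add_right_cancel hpq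
    rcases lt_trichotomy k l with hkl | rfl | hkl
    · exact absurd ⟨k, by omega, hkl, rfl⟩ (ha _ (Sym2.mem_mk_right _ _))
    · rfl
    · exact absurd ⟨l, by omega, hkl, rfl⟩ (hb _ (Sym2.mem_mk_right _ _))
  · exact absurd (mem_arcInterior_of_add_eq hpq.symm hgt hp) (hb b (Sym2.mem_mk_left _ _))

namespace IsArc

variable {x y x' y' : ZMod n} {W : (cycleG n).Walk x y} {W' : (cycleG n).Walk x' y'}
  {a b : ZMod n} {k l : ℕ}

theorem pos (h : IsArc W a k) (hxy : x ≠ y) : 0 < k := by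
  refine Nat.pos_of_ne_zero fun hk => hxy ?_
  have hends := h.ends
  rw [hk, Nat.cast_zero, add_zero, Sym2.eq_iff] at hends
  rcases hends with ⟨rfl, rfl⟩ | ⟨rfl, rfl⟩ <;> rfl

theorem disjoint_arcEdges_iff (h : IsArc W a k) (h' : IsArc W' b l) :
    Disjoint (arcEdges a k) (arcEdges b l) ↔ ∀ e ∈ W.edges, e ∉ W'.edges := by
  simp only [Set.disjoint_left, h.mem_edges, h'.mem_edges]

theorem forall_mem_notMem_arcInterior_iff (h : IsArc W a k) {u v : ZMod n} :
    (∀ z ∈ s(u, v), z ∉ arcInterior a k) ↔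
      u ∉ W.support.tail.dropLast ∧ v ∉ W.support.tail.dropLast := by
  simp only [Sym2.mem_iff, forall_eq_or_imp, forall_eq, h.mem_interior]

end IsArc

section Paths

variable {x₁ y₁ x₂ y₂ x₃ y₃ : ZMod n} {W₁ : (cycleG n).Walk x₁ y₁}
  {W₂ : (cycleG n).Walk x₂ y₂} {W₃ : (cycleG n).Walk x₃ y₃}

theorem mk_ne_of_edges_disjoint (hW₁ : W₁.IsPath) (hW₂ : W₂.IsPath) (hW₃ : W₃.IsPath)
    (hxy₁ : x₁ ≠ y₁) (hxy₂ : x₂ ≠ y₂) (hxy₃ : x₃ ≠ y₃) (h₁₂ : ∀ e ∈ W₁.edges, e ∉ W₂.edges)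
    (h₃₁ : ∀ e ∈ W₃.edges, e ∉ W₁.edges) (h₃₂ : ∀ e ∈ W₃.edges, e ∉ W₂.edges) :
    s(x₁, y₁) ≠ s(x₂, y₂) := by
  obtain ⟨a, k, hA⟩ := exists_isArc_of_isPath hW₁
  obtain ⟨b, l, hB⟩ := exists_isArc_of_isPath hW₂
  obtain ⟨c, m, hC⟩ := exists_isArc_of_isPath hW₃
  rw [hA.ends, hB.ends]
  exact mk_ne_of_disjoint_arcEdges (hA.pos hxy₁) (hB.pos hxy₂) (hC.pos hxy₃)
    ((hA.disjoint_arcEdges_iff hB).mpr h₁₂) ((hC.disjoint_arcEdges_iff hA).mpr h₃₁)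
    ((hC.disjoint_arcEdges_iff hB).mpr h₃₂)

theorem notMem_support_tail_dropLast_of_edges_disjoint (hW₁ : W₁.IsPath) (hW₂ : W₂.IsPath)
    (hxy₂ : x₂ ≠ y₂) (h : ∀ e ∈ W₁.edges, e ∉ W₂.edges) :
    x₂ ∉ W₁.support.tail.dropLast ∧ y₂ ∉ W₁.support.tail.dropLast := by
  obtain ⟨a, k, hA⟩ := exists_isArc_of_isPath hW₁
  obtain ⟨b, l, hB⟩ := exists_isArc_of_isPath hW₂
  rw [← hA.forall_mem_notMem_arcInterior_iff, hB.ends]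
  exact notMem_arcInterior_of_disjoint (hB.pos hxy₂) ((hA.disjoint_arcEdges_iff hB).mpr h)

theorem edges_disjoint_of_mk_ne (hn : 3 ≤ n) (hW₁ : W₁.IsPath) (hW₂ : W₂.IsPath)
    (hne : s(x₁, y₁) ≠ s(x₂, y₂))
    (h₁ : x₂ ∉ W₁.support.tail.dropLast ∧ y₂ ∉ W₁.support.tail.dropLast)
    (h₂ : x₁ ∉ W₂.support.tail.dropLast ∧ y₁ ∉ W₂.support.tail.dropLast) :
    ∀ e ∈ W₁.edges, e ∉ W₂.edges := by
  obtain ⟨a, k, hA⟩ := exists_isArc_of_isPath hW₁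
  obtain ⟨b, l, hB⟩ := exists_isArc_of_isPath hW₂
  rw [← hA.forall_mem_notMem_arcInterior_iff, hB.ends] at h₁
  rw [← hB.forall_mem_notMem_arcInterior_iff, hA.ends] at h₂
  rw [hA.ends, hB.ends] at hne
  rw [← hA.disjoint_arcEdges_iff hB]
  by_contra hdisj
  exact hne (mk_eq_of_not_disjoint_arcEdges hn hdisj h₂ h₁)

end Paths

end cycleG

open cycleG

/-- on a cycle `C` with `n ≥ 3` vertices and `d ≥ 3` demands `(s_i, t_i)` with
`s_i ≠ t_i`, there exist pairwise edge-disjoint paths `P_i` joining `s_i` and `t_i` iff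
(i) the unordered pairs `{s_i, t_i}` are pairwise distinct, and (ii) for every `i` at least
one of the two `s_i`–`t_i` arcs of `C` (equivalently: at least one `s_i`–`t_i` path in `C`)
has no internal vertex equal to some terminal `s_j` or `t_j` with `j ≠ i`. -/
theorem stmt6 (n : ℕ) (hn : 3 ≤ n) (d : ℕ) (hd : 3 ≤ d)
    (s t : Fin d → ZMod n) (hst : ∀ i, s i ≠ t i) :
    (∃ P : ∀ i, (cycleG n).Walk (s i) (t i),
      (∀ i, (P i).IsPath) ∧
      (∀ i j, i ≠ j → ∀ e, e ∈ (P i).edges → e ∉ (P j).edges)) ↔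
    ((∀ i j, i ≠ j → s(s i, t i) ≠ s(s j, t j)) ∧
      (∀ i, ∃ Q : (cycleG n).Walk (s i) (t i), Q.IsPath ∧
        ∀ j, j ≠ i →
          s j ∉ Q.support.tail.dropLast ∧ t j ∉ Q.support.tail.dropLast)) := by
  constructor
  · rintro ⟨P, hP, hdisj⟩
    refine ⟨fun i j hij => ?_, fun i => ⟨P i, hP i, fun j hji => ?_⟩⟩
    · obtain ⟨m, hmi, hmj⟩ := Fin.exists_ne_and_ne_of_two_lt i j hd
      exact mk_ne_of_edges_disjoint (hP i) (hP j) (hP m) (hst i) (hst j) (hst m)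
        (hdisj i j hij) (hdisj m i hmi) (hdisj m j hmj)
    · exact notMem_support_tail_dropLast_of_edges_disjoint (hP i) (hP j) (hst j)
        (hdisj i j hji.symm)
  · rintro ⟨hdist, hQ⟩
    choose Q hQ hQint using hQ
    exact ⟨Q, hQ, fun i j hij => edges_disjoint_of_mk_ne hn (hQ i) (hQ j) (hdist i j hij)
      (hQint i j hij.symm) (hQint j i hij)⟩
end

section
/- Let G = (V, E) be a finite directed graph without parallel arcs, let n = |V|, and let s_1, t_1, s_2, t_2 ∈ V. Let G' be the directed graph obtained from the 2-extension S_2(G) by adding two new vertices s_3 and t_3 together with the arcs (v, s_3) for every v ∈ V, the arc (s_3, t_3), and the arcs (t_3, t_1) and (t_3, t_2); all arcs of G' have length 1. Then G contains two arc-disjoint directed paths, one from s_1 to t_1 and one from s_2 to t_2, if and only if there exist directed walks W_1 from s_1 to t_1, W_2 from s_2 to t_2 and W_3 from s_3 to t_3 in G' that respect unit capacities and such that each W_i is a concatenation of at most n + 1 unique-shortest-path segments. -/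
/-! Subdividing the arcs of two arc-disjoint paths of `G` gives `W₁` and `W₂`, each subdivided arc
`u → m_(u,v) → v` being a unique shortest path of `G'`, and `W₃` is the arc `(s₃, t₃)`.
Conversely, `W₃` must use `(s₃, t₃)`, the only arc leaving `s₃`, so unit capacities keep `W₁` and
`W₂` out of `s₃`; they then contract to walks of `G` sharing no arc, since the arc `(u, m_(u,v))` of
a shared arc `(u, v)` would be used twice, and shortcutting these walks gives the paths. -/

/-- Directed walks in the directed graph on `V` whose arcs are given by the relation `D`
(a directed graph without parallel arcs). -/
inductive DWalk {V : Type u} (D : V → V → Prop) : V → V → Type u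
  | nil {v : V} : DWalk D v v
  | cons {u v w : V} (h : D u v) (p : DWalk D v w) : DWalk D u w

namespace DWalk

variable {V : Type*} {D : V → V → Prop}

/-- The number of arcs of a directed walk. -/
def length : ∀ {x y : V}, DWalk D x y → ℕ
  | _, _, .nil => 0
  | _, _, .cons _ p => p.length + 1

/-- The list of arcs traversed by a directed walk, in order (with multiplicity). -/
def darcs : ∀ {x y : V}, DWalk D x y → List (V × V)
  | _, _, .nil => []
  | _, _, @DWalk.cons _ _ u v _ _ p => (u, v) :: p.darcs

/-- The list of vertices visited by a directed walk, in order. -/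
def support : ∀ {x y : V}, DWalk D x y → List V
  | x, _, .nil => [x]
  | _, _, @DWalk.cons _ _ u _ _ _ p => u :: p.support

/-- Concatenation of directed walks. -/
def append : ∀ {x y z : V}, DWalk D x y → DWalk D y z → DWalk D x z
  | _, _, _, .nil, q => q
  | _, _, _, .cons h p, q => .cons h (p.append q)

/-- A directed walk is a (simple) directed path if it visits no vertex twice. -/
def IsPath {x y : V} (p : DWalk D x y) : Prop := p.support.Nodup

end DWalk

/-- The distance from `x` to `y` in the digraph `D` (all arcs of length 1): the minimum
number of arcs of a directed walk from `x` to `y`. -/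
noncomputable def ddist {V : Type*} (D : V → V → Prop) (x y : V) : ℕ :=
  sInf {n | ∃ p : DWalk D x y, p.length = n}

/-- `DConcatUSP D j w`: the directed walk `w` is a concatenation of (exactly) `j`
consecutive subwalks, each of which is the unique shortest directed path in `D` between
its endpoints. -/
inductive DConcatUSP {V : Type*} (D : V → V → Prop) : ℕ → ∀ {x y : V}, DWalk D x y → Prop
  | nil {x : V} : DConcatUSP D 0 (DWalk.nil : DWalk D x x)
  | cons {j : ℕ} {x y z : V} (p : DWalk D x y) (q : DWalk D y z)
      (hp : p.length = ddist D x y)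
      (hu : ∀ p' : DWalk D x y, p'.length = ddist D x y → p' = p)
      (hq : DConcatUSP D j q) : DConcatUSP D (j + 1) (p.append q)

/-- The arc relation of the graph `G'` of Statement 7: it is obtained from the
2-extension `S₂(G)` of the digraph `G = (V, E)` (vertices `Sum.inl (Sum.inl v)` for
`v ∈ V` and midpoints `Sum.inl (Sum.inr a)` for arcs `a ∈ E`) by adding two new vertices
`s₃ = Sum.inr false` and `t₃ = Sum.inr true`, together with the arcs `(v, s₃)` for all
`v ∈ V`, the arc `(s₃, t₃)`, and the arcs `(t₃, t₁)` and `(t₃, t₂)`. -/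
def arcs7 {V : Type*} (E : V → V → Prop) (t₁ t₂ : V) :
    ((V ⊕ {a : V × V // E a.1 a.2}) ⊕ Bool) →
      ((V ⊕ {a : V × V // E a.1 a.2}) ⊕ Bool) → Prop
  | Sum.inl (Sum.inl u), Sum.inl (Sum.inr a) => (a : V × V).1 = u
  | Sum.inl (Sum.inr a), Sum.inl (Sum.inl v) => (a : V × V).2 = v
  | Sum.inl (Sum.inl _), Sum.inr false => True
  | Sum.inr false, Sum.inr true => True
  | Sum.inr true, Sum.inl (Sum.inl v) => v = t₁ ∨ v = t₂
  | _, _ => False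

namespace DWalk

variable {V : Type*} {D : V → V → Prop}

theorem length_support : ∀ {x y : V} (p : DWalk D x y), p.support.length = p.length + 1
  | _, _, .nil => rfl
  | _, _, .cons _ p => congrArg (· + 1) (length_support p)

theorem start_mem_support : ∀ {x y : V} (p : DWalk D x y), x ∈ p.support
  | _, _, .nil => List.mem_singleton_self _
  | _, _, .cons _ _ => List.mem_cons_self

theorem rel_of_mem_darcs : ∀ {x y : V} (p : DWalk D x y) {u v : V},
    (u, v) ∈ p.darcs → D u v
  | _, _, .nil, _, _, h => nomatch h
  | _, _, .cons huv p, _, _, h => by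
      rcases List.mem_cons.1 h with h | h
      · cases h; exact huv
      · exact rel_of_mem_darcs p h

theorem fst_mem_support : ∀ {x y : V} (p : DWalk D x y) {u v : V},
    (u, v) ∈ p.darcs → u ∈ p.support
  | _, _, .nil, _, _, h => nomatch h
  | _, _, .cons _ p, _, _, h => by
      rcases List.mem_cons.1 h with h | h
      · cases h; exact List.mem_cons_self
      · exact List.mem_cons_of_mem _ (fst_mem_support p h)

theorem exists_suffix_of_mem_support : ∀ {x y : V} (p : DWalk D x y) {z : V},
    z ∈ p.support → ∃ r : DWalk D z y, r.support <:+ p.support ∧ r.darcs <:+ p.darcs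
  | _, _, .nil, _, hz => by
      obtain rfl := List.mem_singleton.1 hz
      exact ⟨.nil, List.suffix_refl _, List.suffix_refl _⟩
  | _, _, .cons h p, _, hz => by
      rcases List.mem_cons.1 hz with rfl | hz
      · exact ⟨.cons h p, List.suffix_refl _, List.suffix_refl _⟩
      · obtain ⟨r, hsupp, hdarcs⟩ := exists_suffix_of_mem_support p hz
        exact ⟨r, hsupp.trans (List.suffix_cons _ _), hdarcs.trans (List.suffix_cons _ _)⟩

namespace IsPath

variable {x y : V} {p : DWalk D x y}

theorem of_cons {u : V} {h : D u x} (hp : (DWalk.cons h p).IsPath) : p.IsPath :=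
  (List.nodup_cons.1 hp).2

theorem ne_of_cons {u : V} {h : D u x} (hp : (DWalk.cons h p).IsPath) : u ≠ x :=
  fun hux => (List.nodup_cons.1 hp).1 (hux ▸ p.start_mem_support)

theorem darcs_nodup : ∀ {x y : V} {p : DWalk D x y}, p.IsPath → p.darcs.Nodup
  | _, _, .nil, _ => List.nodup_nil
  | _, _, .cons _ p, hp => List.nodup_cons.2
      ⟨fun h => (List.nodup_cons.1 hp).1 (p.fst_mem_support h), darcs_nodup hp.of_cons⟩

theorem length_lt_card [Fintype V] (hp : p.IsPath) : p.length < Fintype.card V := by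
  simpa [p.length_support] using List.Nodup.length_le_card hp

end IsPath

theorem exists_isPath_darcs_subset : ∀ {x y : V} (p : DWalk D x y),
    ∃ q : DWalk D x y, q.IsPath ∧ q.darcs ⊆ p.darcs
  | _, _, .nil => ⟨.nil, List.nodup_singleton _, List.Subset.refl _⟩
  | _, _, .cons (u := u) h p => by
      obtain ⟨q, hq, hqp⟩ := exists_isPath_darcs_subset p
      by_cases hu : u ∈ q.support
      · obtain ⟨r, hsupp, hdarcs⟩ := q.exists_suffix_of_mem_support hu
        exact ⟨r, hq.sublist hsupp.sublist,
          fun a ha => List.mem_cons_of_mem _ (hqp (hdarcs.subset ha))⟩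
      · exact ⟨.cons h q, List.nodup_cons.2 ⟨hu, hq⟩, List.cons_subset_cons _ hqp⟩

end DWalk

section UniqueShortest

variable {V : Type*} {D : V → V → Prop} {x y : V}

theorem ddist_eq_length_of_unique {p : DWalk D x y}
    (hp : ∀ p' : DWalk D x y, p'.length ≤ p.length → p' = p) : ddist D x y = p.length := by
  have hle : ddist D x y ≤ p.length := Nat.sInf_le ⟨p, rfl⟩
  obtain ⟨p', hp'⟩ : ddist D x y ∈ {n | ∃ p : DWalk D x y, p.length = n} :=
    Nat.sInf_mem ⟨_, p, rfl⟩
  rw [← hp', hp p' (hp' ▸ hle)]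

theorem DConcatUSP.append_of_unique {z : V} {j : ℕ} {p : DWalk D x y} {q : DWalk D y z}
    (hp : ∀ p' : DWalk D x y, p'.length ≤ p.length → p' = p) (hq : DConcatUSP D j q) :
    DConcatUSP D (j + 1) (p.append q) :=
  .cons p q (ddist_eq_length_of_unique hp).symm
    (fun p' hp' => hp p' ((ddist_eq_length_of_unique hp) ▸ hp').le) hq

theorem DWalk.eq_single_of_length_le_one (h : D x y) (hxy : x ≠ y) (p : DWalk D x y)
    (hp : p.length ≤ 1) : p = .cons h .nil := by
  cases p with
  | nil => exact absurd rfl hxy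
  | cons _ p =>
    cases p with
    | nil => rfl
    | cons _ _ => simp [DWalk.length] at hp

theorem DConcatUSP.single (h : D x y) (hxy : x ≠ y) : DConcatUSP D 1 (.cons h .nil) :=
  append_of_unique (q := .nil) (fun p' hp' => p'.eq_single_of_length_le_one h hxy hp') .nil

end UniqueShortest

theorem cnt_add_cnt_add_cnt_le_one {α : Type*} {l₁ l₂ l₃ : List α}
    (h : (l₁ ++ l₂ ++ l₃).Nodup) (a : α) : cnt a l₁ + cnt a l₂ + cnt a l₃ ≤ 1 := by
  classical
  simpa only [cnt_eq_count, List.count_append, add_assoc] using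
    List.nodup_iff_count_le_one.1 h a

theorem cnt_pos_iff {α : Type*} {a : α} {l : List α} : 0 < cnt a l ↔ a ∈ l := by
  classical
  rw [cnt_eq_count, List.count_pos_iff]

section Reduction

variable {V : Type*} {E : V → V → Prop} {t₁ t₂ : V}

def toMidArc {u v : V} (h : E u v) :
    ((V ⊕ {a : V × V // E a.1 a.2}) ⊕ Bool) × ((V ⊕ {a : V × V // E a.1 a.2}) ⊕ Bool) :=
  (.inl (.inl u), .inl (.inr ⟨(u, v), h⟩))

def fromMidArc {u v : V} (h : E u v) :
    ((V ⊕ {a : V × V // E a.1 a.2}) ⊕ Bool) × ((V ⊕ {a : V × V // E a.1 a.2}) ⊕ Bool) :=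
  (.inl (.inr ⟨(u, v), h⟩), .inl (.inl v))

variable (E) in
def arcS₃T₃ :
    ((V ⊕ {a : V × V // E a.1 a.2}) ⊕ Bool) × ((V ⊕ {a : V × V // E a.1 a.2}) ⊕ Bool) :=
  (.inr false, .inr true)

def subdivArc {u v : V} (h : E u v) :
    DWalk (arcs7 E t₁ t₂) (.inl (.inl u)) (.inl (.inl v)) :=
  .cons (show arcs7 E t₁ t₂ (.inl (.inl u)) (.inl (.inr ⟨(u, v), h⟩)) from rfl)
    (.cons (show arcs7 E t₁ t₂ (.inl (.inr ⟨(u, v), h⟩)) (.inl (.inl v)) from rfl) .nil)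

def subdiv : ∀ {x y : V}, DWalk E x y → DWalk (arcs7 E t₁ t₂) (.inl (.inl x)) (.inl (.inl y))
  | _, _, .nil => .nil
  | _, _, .cons h p => (subdivArc h).append (subdiv p)

@[simp]
theorem darcs_subdiv_nil {x : V} :
    (subdiv (t₁ := t₁) (t₂ := t₂) (.nil : DWalk E x x)).darcs = [] :=
  rfl

@[simp]
theorem darcs_subdiv_cons {u v y : V} (h : E u v) (p : DWalk E v y) :
    (subdiv (t₁ := t₁) (t₂ := t₂) (.cons h p)).darcs =
      toMidArc h :: fromMidArc h :: (subdiv (t₁ := t₁) (t₂ := t₂) p).darcs :=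
  rfl

theorem toMidArc_mem_darcs_subdiv_iff {u v x y : V} (h : E u v) (p : DWalk E x y) :
    toMidArc h ∈ (subdiv (t₁ := t₁) (t₂ := t₂) p).darcs ↔ (u, v) ∈ p.darcs := by
  induction p with
  | nil => simp [DWalk.darcs]
  | cons h' p ih =>
    simp only [darcs_subdiv_cons, DWalk.darcs, List.mem_cons, ih]
    simp [toMidArc, fromMidArc]

theorem fromMidArc_mem_darcs_subdiv_iff {u v x y : V} (h : E u v) (p : DWalk E x y) :
    fromMidArc h ∈ (subdiv (t₁ := t₁) (t₂ := t₂) p).darcs ↔ (u, v) ∈ p.darcs := by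
  induction p with
  | nil => simp [DWalk.darcs]
  | cons h' p ih =>
    simp only [darcs_subdiv_cons, DWalk.darcs, List.mem_cons, ih]
    simp [toMidArc, fromMidArc]

theorem exists_eq_of_mem_darcs_subdiv {x y : V} {p : DWalk E x y} {e}
    (he : e ∈ (subdiv (t₁ := t₁) (t₂ := t₂) p).darcs) :
    ∃ (u v : V) (h : E u v), (u, v) ∈ p.darcs ∧ (e = toMidArc h ∨ e = fromMidArc h) := by
  induction p with
  | nil => simp at he
  | cons h p ih =>
    simp only [darcs_subdiv_cons, List.mem_cons] at he
    rcases he with rfl | rfl | he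
    · exact ⟨_, _, h, List.mem_cons_self, .inl rfl⟩
    · exact ⟨_, _, h, List.mem_cons_self, .inr rfl⟩
    · obtain ⟨u, v, huv, hmem, he⟩ := ih he
      exact ⟨u, v, huv, List.mem_cons_of_mem _ hmem, he⟩

theorem darcs_subdiv_nodup {x y : V} {p : DWalk E x y} (hp : p.darcs.Nodup) :
    (subdiv (t₁ := t₁) (t₂ := t₂) p).darcs.Nodup := by
  induction p with
  | nil => exact List.nodup_nil
  | cons h p ih =>
    obtain ⟨hnotin, hp⟩ := List.nodup_cons.1 hp
    rw [darcs_subdiv_cons, List.nodup_cons, List.nodup_cons, List.mem_cons,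
      toMidArc_mem_darcs_subdiv_iff, fromMidArc_mem_darcs_subdiv_iff]
    exact ⟨not_or.2 ⟨by simp [toMidArc, fromMidArc], hnotin⟩, hnotin, ih hp⟩

theorem disjoint_darcs_subdiv {x y x' y' : V} {p : DWalk E x y} {q : DWalk E x' y'}
    (hpq : ∀ a ∈ p.darcs, a ∉ q.darcs) :
    (subdiv (t₁ := t₁) (t₂ := t₂) p).darcs.Disjoint (subdiv (t₁ := t₁) (t₂ := t₂) q).darcs := by
  intro e hep heq
  obtain ⟨u, v, h, hmem, rfl | rfl⟩ := exists_eq_of_mem_darcs_subdiv hep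
  · exact hpq _ hmem ((toMidArc_mem_darcs_subdiv_iff h q).1 heq)
  · exact hpq _ hmem ((fromMidArc_mem_darcs_subdiv_iff h q).1 heq)

theorem arcS₃T₃_not_mem_darcs_subdiv {x y : V} (p : DWalk E x y) :
    arcS₃T₃ E ∉ (subdiv (t₁ := t₁) (t₂ := t₂) p).darcs := fun he => by
  obtain ⟨u, v, h, -, he | he⟩ := exists_eq_of_mem_darcs_subdiv he <;>
    simp [arcS₃T₃, toMidArc, fromMidArc] at he

/-- `G'` has no arc `(u, v)`, and the midpoint of a length-two walk `u → m → v` is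
pinned down by its endpoints since `G` has no parallel arcs. -/
theorem eq_subdivArc_of_length_le_two {u v : V} (h : E u v) (huv : u ≠ v)
    (p : DWalk (arcs7 E t₁ t₂) (.inl (.inl u)) (.inl (.inl v))) (hp : p.length ≤ 2) :
    p = subdivArc h := by
  cases p with
  | nil => exact absurd rfl huv
  | @cons _ z _ h₁ p =>
    cases p with
    | nil => exact h₁.elim
    | @cons _ _ _ h₂ p =>
      cases p with
      | cons _ _ => simp [DWalk.length] at hp
      | nil =>
        rcases z with (_ | a) | (_ | _)
        · exact h₁.elim
        · obtain rfl : a = ⟨(u, v), h⟩ := Subtype.ext (Prod.ext h₁ h₂)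
          rfl
        · exact h₂.elim
        · exact h₁.elim

theorem dConcatUSP_subdiv : ∀ {x y : V} {p : DWalk E x y}, p.IsPath →
    DConcatUSP (arcs7 E t₁ t₂) p.length (subdiv p)
  | _, _, .nil, _ => .nil
  | _, _, .cons h _, hp => .append_of_unique
      (fun p' hp' => eq_subdivArc_of_length_le_two h hp.ne_of_cons p' hp')
      (dConcatUSP_subdiv hp.of_cons)

theorem arcS₃T₃_mem_darcs {z : (V ⊕ {a : V × V // E a.1 a.2}) ⊕ Bool}
    (W : DWalk (arcs7 E t₁ t₂) (.inr false) z) (hz : z ≠ .inr false) :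
    arcS₃T₃ E ∈ W.darcs := by
  cases W with
  | nil => exact absurd rfl hz
  | @cons _ w _ h _ =>
    rcases w with (_ | _) | (_ | _)
    · exact h.elim
    · exact h.elim
    · exact h.elim
    · exact List.mem_cons_self

theorem exists_walk_of_arcS₃T₃_not_mem : ∀ {w w' : (V ⊕ {a : V × V // E a.1 a.2}) ⊕ Bool}
    (W : DWalk (arcs7 E t₁ t₂) w w') {x y : V}, w = .inl (.inl x) → w' = .inl (.inl y) →
    arcS₃T₃ E ∉ W.darcs →
    ∃ p : DWalk E x y, ∀ u v (h : E u v), (u, v) ∈ p.darcs → toMidArc h ∈ W.darcs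
  | _, _, .nil, _, _, hx, hy, _ => by
    cases hx.symm.trans hy
    exact ⟨.nil, fun _ _ _ h => nomatch h⟩
  | _, _, .cons h₁ .nil, _, _, hx, hy, _ => by
    subst hx hy
    exact h₁.elim
  | _, _, .cons (v := z₁) h₁ (.cons (v := z₂) h₂ W), x, y, hx, hy, hW => by
    have ih := @exists_walk_of_arcS₃T₃_not_mem _ _ W
    subst hx hy
    rcases z₁ with (_ | ⟨⟨a₁, a₂⟩, ha⟩) | (_ | _)
    · exact h₁.elim
    · obtain rfl : a₁ = x := h₁
      rcases z₂ with (w | _) | (_ | _)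
      · obtain rfl : a₂ = w := h₂
        obtain ⟨p, hp⟩ := ih rfl rfl
          fun h => hW (List.mem_cons_of_mem _ (List.mem_cons_of_mem _ h))
        refine ⟨.cons ha p, fun u v h huv => ?_⟩
        rcases List.mem_cons.1 huv with huv | huv
        · cases huv
          exact List.mem_cons_self
        · exact List.mem_cons_of_mem _ (List.mem_cons_of_mem _ (hp u v h huv))
      · exact h₂.elim
      · exact h₂.elim
      · exact h₂.elim
    · exact absurd (List.mem_cons_of_mem _ (arcS₃T₃_mem_darcs (.cons h₂ W) (by simp))) hW
    · exact h₁.elim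

theorem nodup_darcs_subdiv_append {x₁ y₁ x₂ y₂ : V} {p : DWalk E x₁ y₁} {q : DWalk E x₂ y₂}
    (hp : p.IsPath) (hq : q.IsPath) (hpq : ∀ a ∈ p.darcs, a ∉ q.darcs) :
    ((subdiv (t₁ := t₁) (t₂ := t₂) p).darcs ++ (subdiv (t₁ := t₁) (t₂ := t₂) q).darcs ++
      [arcS₃T₃ E]).Nodup := by
  refine .append (.append (darcs_subdiv_nodup hp.darcs_nodup) (darcs_subdiv_nodup hq.darcs_nodup)
    (disjoint_darcs_subdiv hpq)) (List.nodup_singleton _) ?_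
  simp only [List.disjoint_singleton, List.mem_append, not_or]
  exact ⟨arcS₃T₃_not_mem_darcs_subdiv p, arcS₃T₃_not_mem_darcs_subdiv q⟩

theorem exists_arcDisjoint_paths_of_cnt_le_one {s₁ s₂ : V}
    (W₁ : DWalk (arcs7 E t₁ t₂) (.inl (.inl s₁)) (.inl (.inl t₁)))
    (W₂ : DWalk (arcs7 E t₁ t₂) (.inl (.inl s₂)) (.inl (.inl t₂)))
    (W₃ : DWalk (arcs7 E t₁ t₂) (.inr false) (.inr true))
    (hcap : ∀ a, cnt a W₁.darcs + cnt a W₂.darcs + cnt a W₃.darcs ≤ 1) :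
    ∃ (p : DWalk E s₁ t₁) (q : DWalk E s₂ t₂),
      p.IsPath ∧ q.IsPath ∧ ∀ a, a ∈ p.darcs → a ∉ q.darcs := by
  have h₃ := cnt_pos_iff.2 (arcS₃T₃_mem_darcs W₃ (by simp))
  have hcap₃ := hcap (arcS₃T₃ E)
  obtain ⟨p₀, hp₀⟩ := exists_walk_of_arcS₃T₃_not_mem W₁ rfl rfl fun h => by
    have := cnt_pos_iff.2 h; omega
  obtain ⟨q₀, hq₀⟩ := exists_walk_of_arcS₃T₃_not_mem W₂ rfl rfl fun h => by
    have := cnt_pos_iff.2 h; omega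
  obtain ⟨p, hp, hpp₀⟩ := p₀.exists_isPath_darcs_subset
  obtain ⟨q, hq, hqq₀⟩ := q₀.exists_isPath_darcs_subset
  refine ⟨p, q, hp, hq, fun ⟨u, v⟩ hup huq => ?_⟩
  have h := p.rel_of_mem_darcs hup
  have h₁ := cnt_pos_iff.2 (hp₀ u v h (hpp₀ hup))
  have h₂ := cnt_pos_iff.2 (hq₀ u v h (hqq₀ huq))
  have := hcap (toMidArc h)
  omega

end Reduction

/-- `G` contains two arc-disjoint directed paths `s₁ → t₁` and `s₂ → t₂`
iff in `G'` there are directed walks `W₁ : s₁ → t₁`, `W₂ : s₂ → t₂`, `W₃ : s₃ → t₃`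
respecting unit capacities, each a concatenation of at most `n + 1` unique-shortest-path
segments (where `n = |V|`). -/
theorem stmt7 {V : Type*} [Fintype V] (E : V → V → Prop) (s₁ t₁ s₂ t₂ : V) :
    (∃ (p : DWalk E s₁ t₁) (q : DWalk E s₂ t₂),
      p.IsPath ∧ q.IsPath ∧ ∀ a, a ∈ p.darcs → a ∉ q.darcs) ↔
    (∃ (W₁ : DWalk (arcs7 E t₁ t₂) (Sum.inl (Sum.inl s₁)) (Sum.inl (Sum.inl t₁)))
       (W₂ : DWalk (arcs7 E t₁ t₂) (Sum.inl (Sum.inl s₂)) (Sum.inl (Sum.inl t₂)))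
       (W₃ : DWalk (arcs7 E t₁ t₂) (Sum.inr false) (Sum.inr true)),
      (∀ a, cnt a W₁.darcs + cnt a W₂.darcs + cnt a W₃.darcs ≤ 1) ∧
      (∃ j ≤ Fintype.card V + 1, DConcatUSP (arcs7 E t₁ t₂) j W₁) ∧
      (∃ j ≤ Fintype.card V + 1, DConcatUSP (arcs7 E t₁ t₂) j W₂) ∧
      (∃ j ≤ Fintype.card V + 1, DConcatUSP (arcs7 E t₁ t₂) j W₃)) := by
  constructor
  · rintro ⟨p, q, hp, hq, hpq⟩
    exact ⟨subdiv p, subdiv q,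
      .cons (show arcs7 E t₁ t₂ (.inr false) (.inr true) from trivial) .nil,
      cnt_add_cnt_add_cnt_le_one (nodup_darcs_subdiv_append hp hq hpq),
      ⟨p.length, by have := hp.length_lt_card; omega, dConcatUSP_subdiv hp⟩,
      ⟨q.length, by have := hq.length_lt_card; omega, dConcatUSP_subdiv hq⟩,
      ⟨1, by omega, .single _ (by simp)⟩⟩
  · rintro ⟨W₁, W₂, W₃, hcap, -, -, -⟩
    exact exists_arcDisjoint_paths_of_cnt_le_one W₁ W₂ W₃ hcap
end
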